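/- arXiv:2107.05262 — 7 statements merged into one kernel-verified Lean document; each statement's English description precedes it below -/
import Mathlib

section
/- Let L be a positive integer, and let x, p, q : ZMod L → ℝ. Then the second moment satisfies M²(x,p,q) = C_x * D_p * C_xᵀ + C_{s·x} * D_q * C_{s·x}ᵀ, where s·x denotes the reflected signal (s·x)[ℓ] = x[−ℓ]. -/
open scoped BigOperators

/-- Action of the dihedral group on signals indexed by `ZMod L`.
In Mathlib's convention `DihedralGroup.sr k = s * r^k`, so the element `r^k * s`
of the paper is `sr (-k)`.  `r k` acts by the cyclic shift `(r k • x) ℓ = x (ℓ - k)`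
and `sr k = s * r^k = r^(-k) * s` acts by `(sr k • x) ℓ = x (-k - ℓ)`; in particular
`r^k * s = sr (-k)` acts by `ℓ ↦ x (k - ℓ)`, as in the paper. -/
def dihedralAct {L : ℕ} (g : DihedralGroup L) (x : ZMod L → ℝ) : ZMod L → ℝ :=
  match g with
  | .r k => fun ℓ => x (ℓ - k)
  | .sr k => fun ℓ => x (-k - ℓ)

/-- The first moment `M¹(x,p,q) = Σ_k p[k] (r^k · x) + Σ_k q[k] (r^k s · x)`. -/
noncomputable def M1 {L : ℕ} [NeZero L] (x p q : ZMod L → ℝ) : ZMod L → ℝ :=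
  fun ℓ => (∑ k : ZMod L, p k * x (ℓ - k)) + ∑ k : ZMod L, q k * x (k - ℓ)

/-- The second moment
`M²(x,p,q) = Σ_k p[k] (r^k · x)(r^k · x)ᵀ + Σ_k q[k] (r^k s · x)(r^k s · x)ᵀ`. -/
noncomputable def M2 {L : ℕ} [NeZero L] (x p q : ZMod L → ℝ) :
    Matrix (ZMod L) (ZMod L) ℝ :=
  Matrix.of fun i j =>
    (∑ k : ZMod L, p k * x (i - k) * x (j - k)) + ∑ k : ZMod L, q k * x (k - i) * x (k - j)

namespace Matrix

variable {α n : Type*} [NonUnitalNonAssocSemiring α] [AddGroup n] [Fintype n] [DecidableEq n]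

theorem circulant_mul_diagonal_mul_transpose_circulant_apply (v w u : n → α) (i j : n) :
    (circulant v * diagonal w * (circulant u)ᵀ) i j = ∑ k, v (i - k) * w k * u (j - k) := by
  rw [mul_apply]
  simp only [mul_diagonal, transpose_apply, circulant_apply]

end Matrix

open Matrix in
/-- `M²(x,p,q) = C_x * D_p * C_xᵀ + C_{s·x} * D_q * C_{s·x}ᵀ`,
where `(s·x)[ℓ] = x[-ℓ]`. -/
theorem second_moment_circulant (L : ℕ) [NeZero L] (x p q : ZMod L → ℝ) :
    M2 x p q = Matrix.circulant x * Matrix.diagonal p * (Matrix.circulant x)ᵀ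
        + Matrix.circulant (fun ℓ => x (-ℓ)) * Matrix.diagonal q
          * (Matrix.circulant (fun ℓ => x (-ℓ)))ᵀ := by
  ext i j
  rw [M2, of_apply, Matrix.add_apply, circulant_mul_diagonal_mul_transpose_circulant_apply,
    circulant_mul_diagonal_mul_transpose_circulant_apply]
  simp only [neg_sub, mul_comm (p _), mul_comm (q _)]
end

section
/- Let L be a positive integer and x, p, q : ZMod L → ℝ. Then for every k ∈ ZMod L, the discrete Fourier transform of the first moment satisfies \widehat{M¹(x,p,q)}[k] = p̂[k] · x̂[k] + q̂[k] · x̂[−k]. -/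
open scoped BigOperators

/-- The (unnormalized) discrete Fourier transform
`ẑ[k] = Σ_ℓ z[ℓ] exp(-2πi k ℓ / L)`. -/
noncomputable def dft {L : ℕ} [NeZero L] (z : ZMod L → ℂ) : ZMod L → ℂ :=
  fun k => ∑ ℓ : ZMod L,
    z ℓ * Complex.exp (-2 * Real.pi * Complex.I * ((k.val : ℂ) * (ℓ.val : ℂ)) / (L : ℂ))

/-- The DFT of a real signal (hat of its complexification). -/
noncomputable def dftR {L : ℕ} [NeZero L] (z : ZMod L → ℝ) : ZMod L → ℂ :=
  dft fun ℓ => (z ℓ : ℂ)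

/-! The kernel `exp (-2πi k ℓ / L)` of `dft` at frequency `k` is the additive character
`ℓ ↦ stdAddChar (-k * ℓ)` of `ZMod L`. Against any additive character, summing a convolution
`Σ_j p[j] x[ℓ - j]` factors into a product of character sums by the substitution `ℓ = m + j`;
the reflected convolution `Σ_j q[j] x[j - ℓ]` is the convolution of `q` with `x ∘ neg`, whose
character sum at `k` is that of `x` at `-k`. -/

section AddChar

variable {G R : Type*} [AddCommGroup G] [Fintype G] [CommSemiring R]

theorem AddChar.sum_conv_mul (ψ : AddChar G R) (f g : G → R) :
    ∑ ℓ, (∑ j, f j * g (ℓ - j)) * ψ ℓ = (∑ j, f j * ψ j) * ∑ m, g m * ψ m := by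
  calc ∑ ℓ, (∑ j, f j * g (ℓ - j)) * ψ ℓ
      = ∑ j, ∑ ℓ, f j * g (ℓ - j) * ψ ℓ := by
        simp_rw [Finset.sum_mul]
        exact Finset.sum_comm
    _ = ∑ j, ∑ m, f j * g m * ψ (m + j) := by
        refine Finset.sum_congr rfl fun j _ => ?_
        exact Fintype.sum_equiv (Equiv.subRight j) _ _ fun ℓ => by simp
    _ = (∑ j, f j * ψ j) * ∑ m, g m * ψ m := by
        simp_rw [AddChar.map_add_eq_mul, Finset.sum_mul_sum]
        exact Finset.sum_congr rfl fun j _ => Finset.sum_congr rfl fun m _ => by ring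

theorem AddChar.sum_reflConv_mul (ψ : AddChar G R) (f g : G → R) :
    ∑ ℓ, (∑ j, f j * g (j - ℓ)) * ψ ℓ = (∑ j, f j * ψ j) * ∑ m, g m * ψ (-m) := by
  have hrefl : ∑ m, g (-m) * ψ m = ∑ m, g m * ψ (-m) :=
    Fintype.sum_equiv (Equiv.neg G) _ _ fun m => by simp
  simpa only [neg_sub, hrefl] using ψ.sum_conv_mul f fun m => g (-m)

end AddChar

theorem dft_apply_eq_sum_mulShift {L : ℕ} [NeZero L] (z : ZMod L → ℂ) (k : ZMod L) :
    dft z k = ∑ ℓ, z ℓ * (ZMod.stdAddChar : AddChar (ZMod L) ℂ).mulShift (-k) ℓ := by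
  refine Finset.sum_congr rfl fun ℓ _ => ?_
  have hcast : -k * ℓ = ((-(k.val * ℓ.val : ℤ) : ℤ) : ZMod L) := by
    push_cast [ZMod.natCast_val, ZMod.cast_id]
    ring
  rw [AddChar.mulShift_apply, ZMod.stdAddChar_apply, hcast, ZMod.toCircle_intCast]
  congr 2
  push_cast
  ring

/-- `M¹(x,p,q)^[k] = p̂[k]·x̂[k] + q̂[k]·x̂[-k]`. -/
theorem first_moment_dft (L : ℕ) [NeZero L] (x p q : ZMod L → ℝ) (k : ZMod L) :
    dftR (M1 x p q) k = dftR p k * dftR x k + dftR q k * dftR x (-k) := by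
  set ψ := (ZMod.stdAddChar : AddChar (ZMod L) ℂ).mulShift (-k)
  have hdft (z : ZMod L → ℝ) : dftR z k = ∑ ℓ, (z ℓ : ℂ) * ψ ℓ := dft_apply_eq_sum_mulShift _ k
  have hdft_neg : dftR x (-k) = ∑ m, (x m : ℂ) * ψ (-m) := by
    simp only [dftR, dft_apply_eq_sum_mulShift, ψ, AddChar.mulShift_apply, neg_neg, neg_mul_neg]
  simp only [hdft, hdft_neg, M1, Complex.ofReal_add, Complex.ofReal_sum, Complex.ofReal_mul,
    add_mul, Finset.sum_add_distrib]
  exact congrArg₂ (· + ·) (ψ.sum_conv_mul _ fun m => (x m : ℂ))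
    (ψ.sum_reflConv_mul _ fun m => (x m : ℂ))
end

section
/- Let L be a positive integer and x, p, q : ZMod L → ℝ. Then for all i, j ∈ ZMod L, the (i,j) entry of the conjugated second moment F · M²(x,p,q) · F^H satisfies Σ_{a,b} exp(−2πi·i·a/L) · M²(x,p,q)[a,b] · exp(2πi·j·b/L) = p̂[i−j] · x̂[i] · x̂[−j] + q̂[i−j] · x̂[−i] · x̂[j]. -/
open scoped BigOperators

/-! With `e(t) = exp(2πi t / L)`, the DFT turns a translate `x (· - k)` into `e(-k i) x̂[i]`
and a reflection `x (k - ·)` into `e(-k i) x̂[-i]`. Each summand of `M²` is a rank-one matrix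
`u vᵀ`, whose conjugate `F (u vᵀ) Fᴴ` has entries `û[i] v̂[-j]`; the leftover character factors
`e(-k i) e(k j)` then sum against `p` (resp. `q`) to `p̂[i - j]`. -/

open Complex

open scoped ZMod Real

theorem Finset.sum_sum_mul_sum_mul {R ι κ : Type*} [CommSemiring R] [Fintype ι] [Fintype κ]
    (e f : ι → R) (w : κ → R) (g : κ → ι → ι → R) :
    ∑ a, ∑ b, e a * (∑ k, w k * g k a b) * f b
      = ∑ k, w k * ∑ a, ∑ b, e a * g k a b * f b := by
  simp only [Finset.mul_sum, Finset.sum_mul]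
  calc ∑ a, ∑ b, ∑ k, e a * (w k * g k a b) * f b
      = ∑ a, ∑ k, ∑ b, e a * (w k * g k a b) * f b :=
        Finset.sum_congr rfl fun _ _ ↦ Finset.sum_comm
    _ = ∑ k, ∑ a, ∑ b, w k * (e a * g k a b * f b) := by
        rw [Finset.sum_comm]; simp only [mul_left_comm, mul_assoc]

namespace ZMod

variable {N : ℕ} [NeZero N]

lemma cexp_neg_two_pi_I_mul_val_mul_val (k ℓ : ZMod N) :
    exp (-2 * π * I * (k.val * ℓ.val) / N) = stdAddChar (-(k * ℓ)) := by
  have h := stdAddChar_coe (N := N) (-(k.val * ℓ.val : ℤ))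
  push_cast [natCast_zmod_val] at h
  rw [h]
  ring_nf

lemma cexp_two_pi_I_mul_val_mul_val (k ℓ : ZMod N) :
    exp (2 * π * I * (k.val * ℓ.val) / N) = stdAddChar (k * ℓ) := by
  have h := stdAddChar_coe (N := N) (k.val * ℓ.val : ℤ)
  push_cast [natCast_zmod_val] at h
  rw [h]

lemma stdAddChar_neg_mul_sub (k i j : ZMod N) :
    stdAddChar (-(k * (i - j))) = stdAddChar (-(k * i)) * stdAddChar (-(k * -j)) := by
  rw [← AddChar.map_add_eq_mul]
  ring_nf

lemma dft_comp_sub_const {E : Type*} [AddCommGroup E] [Module ℂ E] (Φ : ZMod N → E)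
    (k i : ZMod N) :
    𝓕 (fun ℓ ↦ Φ (ℓ - k)) i = stdAddChar (-(k * i)) • 𝓕 Φ i := by
  simp only [dft_apply, Finset.smul_sum, smul_smul, ← AddChar.map_add_eq_mul]
  exact Fintype.sum_equiv (Equiv.subRight k) _ _ fun ℓ ↦ by
    simp only [Equiv.subRight_apply]; congr 2; ring

lemma dft_comp_const_sub {E : Type*} [AddCommGroup E] [Module ℂ E] (Φ : ZMod N → E)
    (k i : ZMod N) :
    𝓕 (fun ℓ ↦ Φ (k - ℓ)) i = stdAddChar (-(k * i)) • 𝓕 Φ (-i) := by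
  have h := dft_comp_sub_const (fun ℓ ↦ Φ (-ℓ)) k i
  simp only [neg_sub, dft_comp_neg] at h
  exact h

lemma sum_sum_stdAddChar_mul_mul (u v : ZMod N → ℂ) (i j : ZMod N) :
    ∑ a, ∑ b, stdAddChar (-(i * a)) * (u a * v b) * stdAddChar (j * b)
      = 𝓕 u i * 𝓕 v (-j) := by
  simp only [dft_apply, smul_eq_mul, Finset.sum_mul_sum]
  refine Finset.sum_congr rfl fun a _ ↦ Finset.sum_congr rfl fun b _ ↦ ?_
  rw [mul_comm a i, mul_neg, neg_neg, mul_comm b j]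
  ring

lemma sum_sum_stdAddChar_mul_sum_translate_mul (w u : ZMod N → ℂ) (i j : ZMod N) :
    ∑ a, ∑ b,
        stdAddChar (-(i * a)) * (∑ k, w k * (u (a - k) * u (b - k))) * stdAddChar (j * b)
      = 𝓕 w (i - j) * 𝓕 u i * 𝓕 u (-j) := by
  rw [Finset.sum_sum_mul_sum_mul, dft_apply w, Finset.sum_mul, Finset.sum_mul]
  refine Finset.sum_congr rfl fun k _ ↦ ?_
  rw [sum_sum_stdAddChar_mul_mul (fun ℓ ↦ u (ℓ - k)), dft_comp_sub_const, dft_comp_sub_const,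
    smul_eq_mul, smul_eq_mul, smul_eq_mul, stdAddChar_neg_mul_sub]
  ring

lemma sum_sum_stdAddChar_mul_sum_reflect_mul (w u : ZMod N → ℂ) (i j : ZMod N) :
    ∑ a, ∑ b,
        stdAddChar (-(i * a)) * (∑ k, w k * (u (k - a) * u (k - b))) * stdAddChar (j * b)
      = 𝓕 w (i - j) * 𝓕 u (-i) * 𝓕 u j := by
  rw [Finset.sum_sum_mul_sum_mul, dft_apply w, Finset.sum_mul, Finset.sum_mul]
  refine Finset.sum_congr rfl fun k _ ↦ ?_
  rw [sum_sum_stdAddChar_mul_mul (fun ℓ ↦ u (k - ℓ)), dft_comp_const_sub, dft_comp_const_sub,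
    neg_neg, smul_eq_mul, smul_eq_mul, smul_eq_mul, stdAddChar_neg_mul_sub]
  ring

end ZMod

lemma dft_eq_zmod_dft {L : ℕ} [NeZero L] (z : ZMod L → ℂ) : dft z = 𝓕 z := by
  ext k
  refine Finset.sum_congr rfl fun ℓ _ ↦ ?_
  rw [ZMod.cexp_neg_two_pi_I_mul_val_mul_val, smul_eq_mul, mul_comm, mul_comm ℓ]

/-- the entries of the conjugated second moment `F · M² · F^H` satisfy
`Σ_{a,b} e^{-2πi·i·a/L} M²[a,b] e^{2πi·j·b/L} = p̂[i-j]·x̂[i]·x̂[-j] + q̂[i-j]·x̂[-i]·x̂[j]`. -/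
theorem second_moment_dft (L : ℕ) [NeZero L] (x p q : ZMod L → ℝ) (i j : ZMod L) :
    (∑ a : ZMod L, ∑ b : ZMod L,
        Complex.exp (-2 * Real.pi * Complex.I * ((i.val : ℂ) * (a.val : ℂ)) / (L : ℂ))
          * (M2 x p q a b : ℂ)
          * Complex.exp (2 * Real.pi * Complex.I * ((j.val : ℂ) * (b.val : ℂ)) / (L : ℂ)))
      = dftR p (i - j) * dftR x i * dftR x (-j)
        + dftR q (i - j) * dftR x (-i) * dftR x j := by
  have hM2 : ∀ a b, (M2 x p q a b : ℂ) = (∑ k, (p k : ℂ) * ((x (a - k) : ℂ) * x (b - k)))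
      + ∑ k, (q k : ℂ) * ((x (k - a) : ℂ) * x (k - b)) := by
    intro a b
    simp [M2, mul_assoc]
  have hp := ZMod.sum_sum_stdAddChar_mul_sum_translate_mul (fun k ↦ (p k : ℂ))
    (fun ℓ ↦ (x ℓ : ℂ)) i j
  have hq := ZMod.sum_sum_stdAddChar_mul_sum_reflect_mul (fun k ↦ (q k : ℂ))
    (fun ℓ ↦ (x ℓ : ℂ)) i j
  simp only [ZMod.cexp_neg_two_pi_I_mul_val_mul_val, ZMod.cexp_two_pi_I_mul_val_mul_val, hM2,
    mul_add, add_mul, Finset.sum_add_distrib, dftR, dft_eq_zmod_dft]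
  beta_reduce at hp hq
  rw [hp, hq]
end

section
/- Let L be a positive integer and x, p, q : ZMod L → ℝ with Σ_k p[k] + Σ_k q[k] = 1. Then for every i ∈ ZMod L, Σ_{a,b} exp(−2πi·i·a/L) · M²(x,p,q)[a,b] · exp(2πi·i·b/L) = |x̂[i]|². In particular, the second moment determines the power spectrum of x. -/
open scoped BigOperators

/-! Conjugating by the character `ψ a = exp(-2πi·i·a/L)` turns the quadratic form of each rank-one
term `u uᵀ` of `M²` into `|Σ_a ψ a · u a|²`. For a translate `r^k · x` this sum is `ψ k · x̂[i]`, and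
for a reflection `r^k s · x` it is `ψ k · conj x̂[i]` since `x` is real; as `|ψ k| = 1`, every term
contributes `|x̂[i]|²`, and the form equals `(Σ p + Σ q) · |x̂[i]|²`. -/

open Finset ComplexConjugate

namespace AddChar

variable {G R : Type*} [AddCommGroup G] [Fintype G] [CommRing R]

lemma sum_mul_comp_sub_right (ψ : AddChar G R) (f : G → R) (k : G) :
    ∑ a, ψ a * f (a - k) = ψ k * ∑ a, ψ a * f a := by
  rw [← Equiv.sum_comp (Equiv.addRight k), mul_sum]
  simp only [Equiv.coe_addRight, add_sub_cancel_right, map_add_eq_mul]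
  exact sum_congr rfl fun a _ => by ring

lemma sum_mul_comp_sub_left (ψ : AddChar G R) (f : G → R) (k : G) :
    ∑ a, ψ a * f (k - a) = ψ k * ∑ a, ψ (-a) * f a := by
  rw [← Equiv.sum_comp (Equiv.subLeft k), mul_sum]
  simp only [Equiv.subLeft_apply, sub_sub_cancel]
  simp only [sub_eq_add_neg, map_add_eq_mul, mul_assoc]

end AddChar

lemma RCLike.sum_sum_mul_sum_mul_conj {K ι κ : Type*} [RCLike K] [Fintype ι] [Fintype κ]
    (c : ι → K) (w : κ → K) (u : κ → ι → K) :
    ∑ a, ∑ b, c a * (∑ k, w k * u k a * conj (u k b)) * conj (c b)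
      = ∑ k, w k * ((‖∑ a, c a * u k a‖ : ℝ) : K) ^ 2 := by
  simp only [← RCLike.mul_conj, map_sum, map_mul, mul_sum, sum_mul]
  refine ((sum_congr rfl fun a _ => sum_comm).trans sum_comm).trans
    (sum_congr rfl fun k _ => sum_comm.trans
      (sum_congr rfl fun b _ => sum_congr rfl fun a _ => by ring))

open Complex Real in
lemma ZMod.stdAddChar_mul_eq_exp {N : ℕ} [NeZero N] (i a : ZMod N) :
    stdAddChar (i * a) = exp (2 * π * I * (i.val * a.val) / N) := by
  have h : i * a = ((i.val * a.val : ℕ) : ℤ) := by simp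
  rw [h, stdAddChar_coe]
  push_cast
  ring_nf

open Complex Real in
lemma ZMod.stdAddChar_neg_mul_eq_exp {N : ℕ} [NeZero N] (i a : ZMod N) :
    stdAddChar (-i * a) = exp (-2 * π * I * (i.val * a.val) / N) := by
  rw [neg_mul, AddChar.map_neg_eq_inv, stdAddChar_mul_eq_exp, ← Complex.exp_neg]
  ring_nf

/-- if the weights sum to one, the diagonal entries of the conjugated
second moment give the power spectrum:
`Σ_{a,b} e^{-2πi·i·a/L} M²[a,b] e^{2πi·i·b/L} = |x̂[i]|²`. -/
theorem second_moment_power_spectrum (L : ℕ) [NeZero L] (x p q : ZMod L → ℝ)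
    (hsum : (∑ k : ZMod L, p k) + ∑ k : ZMod L, q k = 1) (i : ZMod L) :
    (∑ a : ZMod L, ∑ b : ZMod L,
        Complex.exp (-2 * Real.pi * Complex.I * ((i.val : ℂ) * (a.val : ℂ)) / (L : ℂ))
          * (M2 x p q a b : ℂ)
          * Complex.exp (2 * Real.pi * Complex.I * ((i.val : ℂ) * (b.val : ℂ)) / (L : ℂ)))
      = ((‖dftR x i‖ ^ 2 : ℝ) : ℂ) := by
  set ψ : AddChar (ZMod L) ℂ := ZMod.stdAddChar.mulShift (-i)
  set z : ZMod L → ℂ := fun ℓ => x ℓ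
  have hψ (a : ZMod L) :
      Complex.exp (-2 * Real.pi * Complex.I * ((i.val : ℂ) * (a.val : ℂ)) / (L : ℂ)) = ψ a :=
    (ZMod.stdAddChar_neg_mul_eq_exp i a).symm
  have hψ_conj (b : ZMod L) :
      Complex.exp (2 * Real.pi * Complex.I * ((i.val : ℂ) * (b.val : ℂ)) / (L : ℂ)) = conj (ψ b) := by
    rw [← AddChar.map_neg_eq_conj, AddChar.mulShift_apply, neg_mul_neg, ZMod.stdAddChar_mul_eq_exp]
  have hM (a b : ZMod L) : (M2 x p q a b : ℂ) =
      ∑ k, (p k : ℂ) * z (a - k) * conj (z (b - k)) + ∑ k, (q k : ℂ) * z (k - a) * conj (z (k - b)) := by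
    simp [M2, z]
  have hX : dftR x i = ∑ a, ψ a * z a :=
    sum_congr rfl fun a _ => by rw [hψ, mul_comm]
  have hX_conj : ∑ a, ψ (-a) * z a = conj (dftR x i) := by
    simp [hX, z, AddChar.map_neg_eq_conj]
  simp_rw [hψ, hψ_conj, hM, mul_add, add_mul, sum_add_distrib, RCLike.sum_sum_mul_sum_mul_conj,
    AddChar.sum_mul_comp_sub_right, AddChar.sum_mul_comp_sub_left, ← hX, hX_conj, norm_mul,
    AddChar.norm_apply, RCLike.norm_conj, one_mul, ← sum_mul, ← add_mul]
  have hsum_complex : (∑ k, (p k : ℂ)) + ∑ k, (q k : ℂ) = 1 := by exact_mod_cast hsum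
  simp [hsum_complex]
end

section
/- Let z₁, z₂, z_{n−1}, z_n be nonzero complex numbers and A, B, C, D, E, F complex numbers. Define α = B·z₁·z₂ − A·z₁³, β = C·z_n·(z₁⁴ − z₂²), γ = A·z₁·z₂²·z_n² − B·z₁³·z₂·z_n², α' = E·z₁·z_n − F·z₂·z_{n−1}, β' = D·(z₂²·z_{n−1}² − z₁²·z_n²), γ' = F·z₁²·z₂·z_{n−1}·z_n² − E·z₁·z₂²·z_{n−1}²·z_n, and assume α·β' − α'·β ≠ 0. Suppose w and w' are nonzero complex numbers such that: there exist u, v, u', v' ∈ ℂ with A = u·z₁ + v/z₁, B = u·z₂/z₁ + v·z₁/z₂, C = u·w/z_n + v·z_n/w, D = u'·w + v'/w, E = u'·z₁·z_n + v'/(z₁·z_n), F = u'·z₂·z_{n−1} + v'/(z₂·z_{n−1}); and there exist ũ, ṽ, ũ', ṽ' ∈ ℂ satisfying the same six equations with w replaced by w'. Then w = w'. Moreover, w·(α·β' − α'·β) = α'·γ − α·γ'. -/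
/-! The moment equations are linear in the unknown coefficients `u, v` (resp. `u', v'`); eliminating
them leaves, for `z_{n+1} = W`, two quadratic equations in `W` whose coefficients are computable
from the data. Eliminating `W²` between two quadratics gives `W · (αβ' − α'β) = α'γ − αγ'`, so when
`αβ' − α'β ≠ 0` the common root is unique and given by this formula. -/

section CommonRoot

variable {R : Type*} [CommRing R] {a b c a' b' c' x y : R}

theorem mul_cross_eq_of_common_root (h : a * x ^ 2 + b * x + c = 0)
    (h' : a' * x ^ 2 + b' * x + c' = 0) :
    x * (a * b' - a' * b) = a' * c - a * c' := by
  linear_combination a * h' - a' * h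

theorem eq_of_common_roots [IsDomain R] (hab : a * b' - a' * b ≠ 0)
    (hx : a * x ^ 2 + b * x + c = 0) (hx' : a' * x ^ 2 + b' * x + c' = 0)
    (hy : a * y ^ 2 + b * y + c = 0) (hy' : a' * y ^ 2 + b' * y + c' = 0) :
    x = y :=
  mul_right_cancel₀ hab <|
    (mul_cross_eq_of_common_root hx hx').trans (mul_cross_eq_of_common_root hy hy').symm

end CommonRoot

section Consistency

variable {K : Type*} [Field K] {z₁ z₂ zprev zₙ W A B C D E F u v u' v' : K}

theorem first_moment_quadratic_eq_zero (hz₁ : z₁ ≠ 0) (hz₂ : z₂ ≠ 0) (hzₙ : zₙ ≠ 0) (hW : W ≠ 0)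
    (hA : A = u * z₁ + v / z₁) (hB : B = u * z₂ / z₁ + v * z₁ / z₂)
    (hC : C = u * W / zₙ + v * zₙ / W) :
    (B * z₁ * z₂ - A * z₁ ^ 3) * W ^ 2 + C * zₙ * (z₁ ^ 4 - z₂ ^ 2) * W
      + (A * z₁ * z₂ ^ 2 * zₙ ^ 2 - B * z₁ ^ 3 * z₂ * zₙ ^ 2) = 0 := by
  subst hA hB hC
  field_simp
  ring

theorem second_moment_quadratic_eq_zero (hz₁ : z₁ ≠ 0) (hz₂ : z₂ ≠ 0) (hzprev : zprev ≠ 0)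
    (hzₙ : zₙ ≠ 0) (hW : W ≠ 0)
    (hD : D = u' * W + v' / W) (hE : E = u' * z₁ * zₙ + v' / (z₁ * zₙ))
    (hF : F = u' * z₂ * zprev + v' / (z₂ * zprev)) :
    (E * z₁ * zₙ - F * z₂ * zprev) * W ^ 2 + D * (z₂ ^ 2 * zprev ^ 2 - z₁ ^ 2 * zₙ ^ 2) * W
      + (F * z₁ ^ 2 * z₂ * zprev * zₙ ^ 2 - E * z₁ * z₂ ^ 2 * zprev ^ 2 * zₙ) = 0 := by
  subst hD hE hF
  field_simp
  ring

end Consistency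

/-- the Fourier coefficient `z_{n+1} = w` is uniquely determined as a common
root of the two quadratic consistency equations, under the nondegeneracy condition
`α·β' − α'·β ≠ 0`; moreover `w·(α·β' − α'·β) = α'·γ − α·γ'`. -/
theorem dihedral_mra_znplusone_unique (z₁ z₂ zprev zₙ A B C D E F α β γ α' β' γ' w w' : ℂ)
    (hz₁ : z₁ ≠ 0) (hz₂ : z₂ ≠ 0) (hzprev : zprev ≠ 0) (hzₙ : zₙ ≠ 0)
    (hα : α = B * z₁ * z₂ - A * z₁ ^ 3)
    (hβ : β = C * zₙ * (z₁ ^ 4 - z₂ ^ 2))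
    (hγ : γ = A * z₁ * z₂ ^ 2 * zₙ ^ 2 - B * z₁ ^ 3 * z₂ * zₙ ^ 2)
    (hα' : α' = E * z₁ * zₙ - F * z₂ * zprev)
    (hβ' : β' = D * (z₂ ^ 2 * zprev ^ 2 - z₁ ^ 2 * zₙ ^ 2))
    (hγ' : γ' = F * z₁ ^ 2 * z₂ * zprev * zₙ ^ 2 - E * z₁ * z₂ ^ 2 * zprev ^ 2 * zₙ)
    (hnd : α * β' - α' * β ≠ 0)
    (hw : w ≠ 0) (hw' : w' ≠ 0)
    (hsys : ∃ u v u' v' : ℂ,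
      A = u * z₁ + v / z₁ ∧
      B = u * z₂ / z₁ + v * z₁ / z₂ ∧
      C = u * w / zₙ + v * zₙ / w ∧
      D = u' * w + v' / w ∧
      E = u' * z₁ * zₙ + v' / (z₁ * zₙ) ∧
      F = u' * z₂ * zprev + v' / (z₂ * zprev))
    (hsys' : ∃ u v u' v' : ℂ,
      A = u * z₁ + v / z₁ ∧
      B = u * z₂ / z₁ + v * z₁ / z₂ ∧
      C = u * w' / zₙ + v * zₙ / w' ∧
      D = u' * w' + v' / w' ∧
      E = u' * z₁ * zₙ + v' / (z₁ * zₙ) ∧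
      F = u' * z₂ * zprev + v' / (z₂ * zprev)) :
    w = w' ∧ w * (α * β' - α' * β) = α' * γ - α * γ' := by
  obtain ⟨_, _, _, _, hA, hB, hC, hD, hE, hF⟩ := hsys
  obtain ⟨_, _, _, _, hA', hB', hC', hD', hE', hF'⟩ := hsys'
  subst hα hβ hγ hα' hβ' hγ'
  have hq := first_moment_quadratic_eq_zero hz₁ hz₂ hzₙ hw hA hB hC
  have hq' := second_moment_quadratic_eq_zero hz₁ hz₂ hzprev hzₙ hw hD hE hF
  refine ⟨eq_of_common_roots hnd hq hq' ?_ ?_, mul_cross_eq_of_common_root hq hq'⟩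
  · exact first_moment_quadratic_eq_zero hz₁ hz₂ hzₙ hw' hA' hB' hC'
  · exact second_moment_quadratic_eq_zero hz₁ hz₂ hzprev hzₙ hw' hD' hE' hF'
end

section
/- Let A₀, A₁, A₂, z₁, z₂ be complex numbers with |z₁| = 1 and |z₂| = 1, and suppose A₀·z₁⁸ + A₁·z₁⁶·z₂ + A₂·z₁⁴·z₂² + A₁·z₁²·z₂³ + A₀·z₂⁴ = 0. Then B₁·z₁⁴ + B₂·z₁²·z₂ + B₁·z₂² = 0, where B₁ and B₂ are the real numbers B₁ = 2·Im(conj(A₀)·A₁) and B₂ = 2·Im(conj(A₀)·A₂) (regarded as complex numbers in the displayed equation). -/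
/-!
On the unit circle `conj z = z⁻¹`, so conjugating the palindromic quartic and clearing the
denominator `z₁⁸ z₂⁴` gives the same quartic with conjugated coefficients. Eliminating the
extreme terms between the two equations (multiply by `conj A₀` and by `A₀` and subtract)
leaves `z₁² z₂ · I · (B₁ z₁⁴ + B₂ z₁² z₂ + B₁ z₂²) = 0`, because
`conj a * b - a * conj b = 2 Im(conj a * b) I`.
-/

open ComplexConjugate

section Palindromic

variable {R : Type*} [CommRing R]

def palQuartic (a₀ a₁ a₂ x y : R) : R :=
  a₀ * x ^ 8 + a₁ * x ^ 6 * y + a₂ * x ^ 4 * y ^ 2 + a₁ * x ^ 2 * y ^ 3 + a₀ * y ^ 4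

theorem mul_palQuartic_sub_mul_palQuartic (a₀ a₁ a₂ b₀ b₁ b₂ x y : R) :
    b₀ * palQuartic a₀ a₁ a₂ x y - a₀ * palQuartic b₀ b₁ b₂ x y
      = x ^ 2 * y * ((b₀ * a₁ - a₀ * b₁) * x ^ 4 + (b₀ * a₂ - a₀ * b₂) * x ^ 2 * y
        + (b₀ * a₁ - a₀ * b₁) * y ^ 2) := by
  unfold palQuartic
  ring

end Palindromic

namespace Complex

theorem conj_palQuartic_mul {z₁ z₂ : ℂ} (hz₁ : ‖z₁‖ = 1) (hz₂ : ‖z₂‖ = 1) (a₀ a₁ a₂ : ℂ) :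
    conj (palQuartic a₀ a₁ a₂ z₁ z₂) * (z₁ ^ 8 * z₂ ^ 4)
      = palQuartic (conj a₀) (conj a₁) (conj a₂) z₁ z₂ := by
  have hz₁' : z₁ ≠ 0 := norm_ne_zero_iff.mp (hz₁ ▸ one_ne_zero)
  have hz₂' : z₂ ≠ 0 := norm_ne_zero_iff.mp (hz₂ ▸ one_ne_zero)
  simp only [palQuartic, map_add, map_mul, map_pow, ← inv_eq_conj hz₁, ← inv_eq_conj hz₂]
  field_simp
  ring

theorem palQuartic_conj_eq_zero {a₀ a₁ a₂ z₁ z₂ : ℂ} (hz₁ : ‖z₁‖ = 1) (hz₂ : ‖z₂‖ = 1)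
    (h : palQuartic a₀ a₁ a₂ z₁ z₂ = 0) :
    palQuartic (conj a₀) (conj a₁) (conj a₂) z₁ z₂ = 0 := by
  rw [← conj_palQuartic_mul hz₁ hz₂, h, map_zero, zero_mul]

theorem conj_mul_sub_mul_conj (a b : ℂ) :
    conj a * b - a * conj b = ((2 * (conj a * b).im : ℝ) : ℂ) * I := by
  simpa only [map_mul, conj_conj] using sub_conj (conj a * b)

end Complex

open Complex in
/-- from the palindromic quartic in unit-modulus `z₁, z₂` one derives the
real-coefficient quadratic `B₁·z₁⁴ + B₂·z₁²·z₂ + B₁·z₂² = 0` with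
`B₁ = 2·Im(conj(A₀)·A₁)` and `B₂ = 2·Im(conj(A₀)·A₂)`. -/
theorem dihedral_mra_palindromic_real_quadratic (A₀ A₁ A₂ z₁ z₂ : ℂ)
    (hz₁ : ‖z₁‖ = 1) (hz₂ : ‖z₂‖ = 1)
    (h : A₀ * z₁ ^ 8 + A₁ * z₁ ^ 6 * z₂ + A₂ * z₁ ^ 4 * z₂ ^ 2
        + A₁ * z₁ ^ 2 * z₂ ^ 3 + A₀ * z₂ ^ 4 = 0) :
    ((2 * ((starRingEnd ℂ) A₀ * A₁).im : ℝ) : ℂ) * z₁ ^ 4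
      + ((2 * ((starRingEnd ℂ) A₀ * A₂).im : ℝ) : ℂ) * z₁ ^ 2 * z₂
      + ((2 * ((starRingEnd ℂ) A₀ * A₁).im : ℝ) : ℂ) * z₂ ^ 2 = 0 := by
  have hP : palQuartic A₀ A₁ A₂ z₁ z₂ = 0 := h
  have key := mul_palQuartic_sub_mul_palQuartic A₀ A₁ A₂ (conj A₀) (conj A₁) (conj A₂) z₁ z₂
  rw [hP, palQuartic_conj_eq_zero hz₁ hz₂ hP, mul_zero, mul_zero, sub_zero, eq_comm,
    conj_mul_sub_mul_conj, conj_mul_sub_mul_conj] at key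
  have hz₁' : z₁ ≠ 0 := norm_ne_zero_iff.mp (hz₁ ▸ one_ne_zero)
  have hz₂' : z₂ ≠ 0 := norm_ne_zero_iff.mp (hz₂ ▸ one_ne_zero)
  have hfactor : z₁ ^ 2 * z₂ * I ≠ 0 := by simp [hz₁', hz₂']
  refine (mul_eq_zero.mp ?_).resolve_left hfactor
  linear_combination key
end

section
/- Let L be a positive integer and λ ∈ ℂ with λ^L = 1. Let z, p, q : ZMod L → ℂ with z[k] ≠ 0 for all k, and let M : ZMod L → ZMod L → ℂ. Suppose that for all i, j ∈ ZMod L: p[i+j]·z[i]·z[j] + q[−(i+j)] / (z[i]·z[j]) = M[i,j]. Define z'[k] = λ^{k.val}·z[k], p'[k] = λ^{−k.val}·p[k], and q'[k] = λ^{−k.val}·q[k] (these are well defined since λ^L = 1). Then for all i, j ∈ ZMod L: p'[i+j]·z'[i]·z'[j] + q'[−(i+j)] / (z'[i]·z'[j]) = M[i,j]. -/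
/-!
The map `k ↦ λ ^ k.val` is an additive character `ψ` of `ZMod L` (Mathlib's `zmodChar`).
Twisting `z` by `ψ` and `p`, `q` by `ψ⁻¹` multiplies the first term of the `(i, j)` moment by
`ψ(i + j)⁻¹ ψ(i) ψ(j) = 1`, and both numerator and denominator of the second term by
`ψ(-(i + j))⁻¹ = ψ(i) ψ(j)`; so the moments are unchanged, for any additive character.
-/

/-- The `(i, j)` second moment of dihedral multi-reference alignment in the Fourier domain. -/
def dihedralMoment {A K : Type*} [AddCommGroup A] [Field K] (z p q : A → K) (i j : A) : K :=
  p (i + j) * z i * z j + q (-(i + j)) / (z i * z j)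

theorem dihedralMoment_twist {A K : Type*} [AddCommGroup A] [Field K] (ψ : AddChar A K)
    (z p q : A → K) :
    dihedralMoment (fun k ↦ ψ k * z k) (fun k ↦ (ψ k)⁻¹ * p k) (fun k ↦ (ψ k)⁻¹ * q k) =
      dihedralMoment z p q := by
  funext i j
  have hψ : ψ i * ψ j ≠ 0 := mul_ne_zero (ψ.val_isUnit i).ne_zero (ψ.val_isUnit j).ne_zero
  simp only [dihedralMoment, AddChar.map_neg_eq_inv, inv_inv, AddChar.map_add_eq_mul]
  rw [mul_mul_mul_comm (ψ i) (z i) (ψ j) (z j), mul_div_mul_left _ _ hψ]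
  congr 1
  calc (ψ i * ψ j)⁻¹ * p (i + j) * (ψ i * z i) * (ψ j * z j)
      = (ψ i * ψ j)⁻¹ * (ψ i * ψ j) * (p (i + j) * z i * z j) := by ring
    _ = p (i + j) * z i * z j := by rw [inv_mul_cancel₀ hψ, one_mul]

theorem dihedral_mra_scaling_invariance_general (L : ℕ) [NeZero L] (lam : ℂ) (hlam : lam ^ L = 1)
    (z p q : ZMod L → ℂ) (M : ZMod L → ZMod L → ℂ)
    (h : ∀ i j : ZMod L,
      p (i + j) * z i * z j + q (-(i + j)) / (z i * z j) = M i j) :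
    ∀ i j : ZMod L,
      (lam⁻¹ ^ (i + j).val * p (i + j)) * (lam ^ i.val * z i) * (lam ^ j.val * z j)
        + (lam⁻¹ ^ (-(i + j)).val * q (-(i + j)))
            / ((lam ^ i.val * z i) * (lam ^ j.val * z j)) = M i j := by
  intro i j
  have htwist := congrFun₂ (dihedralMoment_twist (AddChar.zmodChar L hlam) z p q) i j
  simp only [dihedralMoment, AddChar.zmodChar_apply, ← inv_pow] at htwist
  rw [htwist, h]

/-- weighted-homogeneity (scaling invariance) of the second-moment equation
system in the Fourier domain: rescaling `z[k] ↦ λ^k z[k]`, `p[k] ↦ λ^{-k} p[k]`,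
`q[k] ↦ λ^{-k} q[k]` for an `L`-th root of unity `λ` preserves the moment values. -/
theorem dihedral_mra_scaling_invariance (L : ℕ) [NeZero L] (lam : ℂ) (hlam : lam ^ L = 1)
    (z p q : ZMod L → ℂ) (hz : ∀ k, z k ≠ 0) (M : ZMod L → ZMod L → ℂ)
    (h : ∀ i j : ZMod L,
      p (i + j) * z i * z j + q (-(i + j)) / (z i * z j) = M i j) :
    ∀ i j : ZMod L,
      (lam⁻¹ ^ (i + j).val * p (i + j)) * (lam ^ i.val * z i) * (lam ^ j.val * z j)
        + (lam⁻¹ ^ (-(i + j)).val * q (-(i + j)))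
            / ((lam ^ i.val * z i) * (lam ^ j.val * z j)) = M i j :=
  dihedral_mra_scaling_invariance_general L lam hlam z p q M h
end
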